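/- arXiv:0812.4919 — 2 statements merged into one kernel-verified Lean document; each statement's English description precedes it below -/
import Mathlib

section
/- The hexagonal grid H_r of radius r is isomorphic to a subgraph of the (4r−1) × (4r−1) rectangular grid. -/
/-! The brick-wall model draws `H_r` in `ℤ²` with every edge of taxicab length one, inside the box
`[1 - 2r, 2r - 1] × [1 - r, r]`, whose sides have at most `4r - 1` lattice points. Translating
that box to the origin therefore lands `H_r` inside the `(4r - 1) × (4r - 1)` grid. -/

open SimpleGraph

/-- `A` is a subdivision of `H`: branch vertices given by an injective map `f`, and each
edge of `H` is replaced by a path in `A`; the paths are internally disjoint, internal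
vertices avoid branch vertices, and every vertex and edge of `A` is used. -/
def IsSubdivisionOf {U W : Type*} (A : SimpleGraph U) (H : SimpleGraph W) : Prop :=
  ∃ (f : W → U) (p : ∀ ⦃a b⦄, H.Adj a b → A.Walk (f a) (f b)),
    Function.Injective f ∧
    (∀ ⦃a b⦄ (h : H.Adj a b), (p h).IsPath) ∧
    (∀ ⦃a b⦄ (h : H.Adj a b) (w : W), f w ∈ (p h).support → w = a ∨ w = b) ∧
    (∀ ⦃a b⦄ (h : H.Adj a b) ⦃c d⦄ (h' : H.Adj c d), s(a, b) ≠ s(c, d) →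
      ∀ u, u ∈ (p h).support → u ∈ (p h').support →
        (u = f a ∨ u = f b) ∧ (u = f c ∨ u = f d)) ∧
    (∀ u : U, u ∈ Set.range f ∨ ∃ (a b : W) (h : H.Adj a b), u ∈ (p h).support) ∧
    (∀ e ∈ A.edgeSet, ∃ (a b : W) (h : H.Adj a b), e ∈ (p h).edges)

/-- `G` contains a subdivision of `H` as a subgraph (i.e. `H` is a topological minor). -/
def ContainsSubdivisionOf {V W : Type*} (G : SimpleGraph V) (H : SimpleGraph W) : Prop :=
  ∃ A : G.Subgraph, IsSubdivisionOf A.coe H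

/-- Planarity, via Kuratowski's characterization. -/
def IsPlanar {V : Type*} (G : SimpleGraph V) : Prop :=
  ¬ ContainsSubdivisionOf G (completeGraph (Fin 5)) ∧
  ¬ ContainsSubdivisionOf G (completeBipartiteGraph (Fin 3) (Fin 3))

/-- `G ∈ Apex(k)`: some set of at most `k` vertices can be deleted to leave a planar graph. -/
def Apex {V : Type*} (k : ℕ) (G : SimpleGraph V) : Prop :=
  ∃ X : Finset V, X.card ≤ k ∧ IsPlanar (G.induce ((X : Set V)ᶜ))

/-- `H` is a minor of `G`, via branch sets. -/
def HasMinor {V W : Type*} (G : SimpleGraph V) (H : SimpleGraph W) : Prop :=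
  ∃ f : W → Set V,
    (∀ w, (f w).Nonempty) ∧
    (∀ w, (G.induce (f w)).Connected) ∧
    (∀ w w', w ≠ w' → Disjoint (f w) (f w')) ∧
    (∀ ⦃w w'⦄, H.Adj w w' → ∃ a ∈ f w, ∃ b ∈ f w', G.Adj a b)

/-- `G` has a tree decomposition of width at most `w`. -/
def HasTreeDecompositionOfWidth {V : Type*} (G : SimpleGraph V) (w : ℕ) : Prop :=
  ∃ (ι : Type) (T : SimpleGraph ι) (B : ι → Finset V),
    T.IsAcyclic ∧ T.Connected ∧
    (∀ v : V, ∃ t, v ∈ B t) ∧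
    (∀ ⦃u v⦄, G.Adj u v → ∃ t, u ∈ B t ∧ v ∈ B t) ∧
    (∀ v : V, (T.induce {t | v ∈ B t}).Connected) ∧
    (∀ t, (B t).card ≤ w + 1)

/-- The treewidth of `G`. -/
noncomputable def treewidth {V : Type*} (G : SimpleGraph V) : ℕ :=
  sInf {w | HasTreeDecompositionOfWidth G w}

/-- The vertex set of the hexagonal grid of radius `r` (brick-wall model in `ℤ × ℤ`). -/
def hexVertexSet (r : ℕ) : Set (ℤ × ℤ) :=
  {p | ∃ b : ℤ, |b| ≤ (r : ℤ) - 1 ∧ (p.2 = b ∨ p.2 = b + 1) ∧ |p.1| ≤ 2 * (r : ℤ) - 1 - |b|}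

/-- The hexagonal grid `H_r` of radius `r` (brick-wall model). -/
def hexGrid (r : ℕ) : SimpleGraph (hexVertexSet r) :=
  SimpleGraph.fromRel fun p q =>
    (p.val.2 = q.val.2 ∧ p.val.1 + 1 = q.val.1) ∨
    (p.val.1 = q.val.1 ∧ p.val.2 + 1 = q.val.2 ∧ Odd (p.val.1 + p.val.2))

/-- The `g × g` grid graph. -/
def gridGraph (g : ℕ) : SimpleGraph (Fin g × Fin g) :=
  SimpleGraph.fromRel fun p q =>
    (p.1 = q.1 ∧ (p.2 : ℕ) + 1 = (q.2 : ℕ)) ∨ (p.2 = q.2 ∧ (p.1 : ℕ) + 1 = (q.1 : ℕ))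

lemma hexVertexSet_bounds {r : ℕ} (p : hexVertexSet r) :
    |p.val.1| ≤ 2 * (r : ℤ) - 1 ∧ 1 - (r : ℤ) ≤ p.val.2 ∧ p.val.2 ≤ r := by
  obtain ⟨⟨x, y⟩, b, hb, hy, hx⟩ := p
  simp only [Int.abs_eq_natAbs] at hb hx ⊢
  omega

lemma hexGrid_adj_abs_add_abs {r : ℕ} {a b : hexVertexSet r} (h : (hexGrid r).Adj a b) :
    |a.val.1 - b.val.1| + |a.val.2 - b.val.2| = 1 := by
  obtain ⟨-, h⟩ := h
  simp only [Int.abs_eq_natAbs]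
  omega

lemma gridGraph_adj_of_abs_add_abs {g : ℕ} {p q : Fin g × Fin g}
    (h : |(p.1 : ℤ) - q.1| + |(p.2 : ℤ) - q.2| = 1) : (gridGraph g).Adj p q := by
  simp only [Int.abs_eq_natAbs] at h
  refine ⟨fun hpq => by simp [hpq] at h, ?_⟩
  simp only [Fin.ext_iff]
  omega

theorem exists_injective_gridGraph_hom {α : Type*} (G : SimpleGraph α) (φ : α → ℤ × ℤ)
    (hφ : Function.Injective φ)
    (hadj : ∀ a b, G.Adj a b → |(φ a).1 - (φ b).1| + |(φ a).2 - (φ b).2| = 1)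
    (g : ℕ) (c : ℤ × ℤ)
    (hbox : ∀ a, (φ a).1 - c.1 ∈ Set.Ico 0 (g : ℤ) ∧ (φ a).2 - c.2 ∈ Set.Ico 0 (g : ℤ)) :
    ∃ f : α → Fin g × Fin g,
      Function.Injective f ∧ ∀ a b, G.Adj a b → (gridGraph g).Adj (f a) (f b) := by
  let toFin (z : ℤ) (hz : z ∈ Set.Ico 0 (g : ℤ)) : Fin g := ⟨z.toNat, by grind⟩
  have coe_toFin (z : ℤ) (hz) : ((toFin z hz : ℕ) : ℤ) = z := Int.toNat_of_nonneg hz.1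
  let f a : Fin g × Fin g := (toFin _ (hbox a).1, toFin _ (hbox a).2)
  have coe_fst (a : α) : ((f a).1 : ℤ) = (φ a).1 - c.1 := coe_toFin _ (hbox a).1
  have coe_snd (a : α) : ((f a).2 : ℤ) = (φ a).2 - c.2 := coe_toFin _ (hbox a).2
  refine ⟨f, fun a b hab => hφ ?_, fun a b h => gridGraph_adj_of_abs_add_abs ?_⟩
  · have h1 := coe_fst a; have h2 := coe_snd a
    rw [hab, coe_fst] at h1; rw [hab, coe_snd] at h2
    exact Prod.ext (by linarith) (by linarith)
  · rw [coe_fst, coe_fst, coe_snd, coe_snd, sub_sub_sub_cancel_right, sub_sub_sub_cancel_right]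
    exact hadj a b h

theorem stmt7_general (r : ℕ) :
    ∃ f : hexVertexSet r → Fin (4 * r - 1) × Fin (4 * r - 1),
      Function.Injective f ∧
      ∀ a b, (hexGrid r).Adj a b → (gridGraph (4 * r - 1)).Adj (f a) (f b) := by
  refine exists_injective_gridGraph_hom (hexGrid r) Subtype.val Subtype.val_injective
    (fun _ _ => hexGrid_adj_abs_add_abs) _ (1 - 2 * r, 1 - r) fun p => ?_
  have := hexVertexSet_bounds p
  simp only [Set.mem_Ico, Int.abs_eq_natAbs] at this ⊢
  omega

/-- the hexagonal grid `H_r` is isomorphic to a subgraph of the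
`(4r−1) × (4r−1)` rectangular grid. -/
theorem stmt7 (r : ℕ) (hr : 1 ≤ r) :
    ∃ f : hexVertexSet r → Fin (4 * r - 1) × Fin (4 * r - 1),
      Function.Injective f ∧
      ∀ a b, (hexGrid r).Adj a b → (gridGraph (4 * r - 1)).Adj (f a) (f b) :=
  stmt7_general r
end

section
/- Let G be a graph and W ⊆ V(G). Suppose that for every X ⊆ V(G) with |X| ≤ k such that G − X is planar, W ⊆ X. Then G ∈ Apex(k) if and only if |W| ≤ k and G − W ∈ Apex(k − |W|). -/
open SimpleGraph

lemma IsSubdivisionOf.of_iso {U U' W : Type*} {A : SimpleGraph U} {B : SimpleGraph U'}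
    {H : SimpleGraph W} (e : A ≃g B) (h : IsSubdivisionOf A H) : IsSubdivisionOf B H := by
  obtain ⟨f, p, hf, hpath, hbranch, hdisj, hcover, hedge⟩ := h
  refine ⟨e ∘ f, fun a b hab => (p hab).map e.toHom, e.injective.comp hf,
    fun a b hab => (hpath hab).map e.injective, ?_, ?_, ?_, ?_⟩
  · intro a b hab w hw
    rw [Walk.support_map, List.mem_map] at hw
    obtain ⟨u, hu, hue⟩ := hw
    exact hbranch hab w (e.injective hue ▸ hu)
  · intro a b hab c d hcd hne u hu hu'
    rw [Walk.support_map, List.mem_map] at hu hu'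
    obtain ⟨x, hx, rfl⟩ := hu
    obtain ⟨y, hy, hyx⟩ := hu'
    obtain rfl := e.injective hyx
    obtain ⟨h₁, h₂⟩ := hdisj hab hcd hne y hx hy
    exact ⟨h₁.imp (congrArg e) (congrArg e), h₂.imp (congrArg e) (congrArg e)⟩
  · intro u
    rcases hcover (e.symm u) with ⟨w, hw⟩ | ⟨a, b, hab, hu⟩
    · exact .inl ⟨w, by simp [hw]⟩
    · exact .inr ⟨a, b, hab, by simpa [Walk.support_map] using ⟨e.symm u, hu, by simp⟩⟩
  · rintro ⟨x, y⟩ hxy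
    obtain ⟨a, b, hab, hm⟩ := hedge s(e.symm x, e.symm y) (e.symm.map_rel_iff.mpr hxy)
    exact ⟨a, b, hab, by simpa [Walk.edges_map] using ⟨_, hm, by simp⟩⟩

lemma ContainsSubdivisionOf.of_isContained {V V' W : Type*} {G : SimpleGraph V}
    {G' : SimpleGraph V'} {H : SimpleGraph W} (hG : G ⊑ G') (h : ContainsSubdivisionOf G H) :
    ContainsSubdivisionOf G' H := by
  obtain ⟨f⟩ := hG
  obtain ⟨A, hA⟩ := h
  exact ⟨A.map f.toHom, hA.of_iso (f.isoSubgraphMap A)⟩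

lemma IsPlanar.of_isContained {V V' : Type*} {G : SimpleGraph V} {G' : SimpleGraph V'}
    (hG : G ⊑ G') (h : IsPlanar G') : IsPlanar G :=
  ⟨fun c => h.1 (c.of_isContained hG), fun c => h.2 (c.of_isContained hG)⟩

section Induce

variable {V : Type*} (G : SimpleGraph V)

noncomputable def induceInduceIso (s : Set V) (t : Set s) :
    (G.induce s).induce t ≃g G.induce (Subtype.val '' t) where
  toEquiv := Equiv.Set.image Subtype.val t Subtype.val_injective
  map_rel_iff' := Iff.rfl

lemma isPlanar_induce_induce_iff (s : Set V) (t : Set s) :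
    IsPlanar ((G.induce s).induce t) ↔ IsPlanar (G.induce (Subtype.val '' t)) :=
  ⟨IsPlanar.of_isContained (induceInduceIso G s t).isContained',
    IsPlanar.of_isContained (induceInduceIso G s t).isContained⟩

lemma apex_induce_compl_iff (W : Finset V) (j : ℕ) :
    Apex j (G.induce (W : Set V)ᶜ) ↔
      ∃ X : Finset V, W ⊆ X ∧ X.card ≤ W.card + j ∧
        IsPlanar (G.induce (X : Set V)ᶜ) := by
  classical
  constructor
  · rintro ⟨X', hcard, hpl⟩
    refine ⟨W ∪ X'.map (.subtype _), Finset.subset_union_left, ?_, ?_⟩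
    · grw [Finset.card_union_le, Finset.card_map, hcard]
    · have hX : Subtype.val '' (X' : Set ↥(W : Set V)ᶜ)ᶜ =
          ((W ∪ X'.map (.subtype _) : Finset V) : Set V)ᶜ := by
        ext v
        by_cases hv : v ∈ W <;> simp [hv]
      rwa [isPlanar_induce_induce_iff, hX] at hpl
  · rintro ⟨X, hWX, hcard, hpl⟩
    refine ⟨X.subtype (· ∈ (W : Set V)ᶜ), ?_, ?_⟩
    · simp only [Finset.card_subtype, Set.mem_compl_iff, Finset.mem_coe]
      rw [← Finset.sdiff_eq_filter, Finset.card_sdiff_of_subset hWX]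
      omega
    · have hX : Subtype.val '' (X.subtype (· ∈ (W : Set V)ᶜ) : Set ↥(W : Set V)ᶜ)ᶜ =
          (X : Set V)ᶜ := by
        ext v
        by_cases hv : v ∈ W
        · simpa [hv] using hWX hv
        · simp [hv]
      rwa [isPlanar_induce_induce_iff, hX]

end Induce

/-- kernel equivalence: if every apex set of size at most `k`
contains `W`, then `G ∈ Apex(k)` iff `|W| ≤ k` and `G − W ∈ Apex(k − |W|)`. -/
theorem stmt16 {V : Type*} (G : SimpleGraph V) (k : ℕ) (W : Finset V)
    (hforced : ∀ X : Finset V, X.card ≤ k → IsPlanar (G.induce ((X : Set V)ᶜ)) → W ⊆ X) :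
    Apex k G ↔ W.card ≤ k ∧ Apex (k - W.card) (G.induce ((W : Set V)ᶜ)) := by
  rw [apex_induce_compl_iff]
  constructor
  · rintro ⟨X, hXk, hXpl⟩
    have hWX : W ⊆ X := hforced X hXk hXpl
    have hWk : W.card ≤ k := (Finset.card_le_card hWX).trans hXk
    exact ⟨hWk, X, hWX, by omega, hXpl⟩
  · rintro ⟨hWk, X, -, hXk, hXpl⟩
    exact ⟨X, by omega, hXpl⟩
end
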